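/- arXiv:1106.4412 — 7 statements merged into one kernel-verified Lean document; each statement's English description precedes it below -/
import Mathlib

section
/- Let Σ_P and Σ_T be types and Δ : Σ_P → Σ_T → Bool, and suppose M_Δ does not contain the wildcard matrix. Consider the equivalence relation on non-zero rows given by row identity and the equivalence relation on non-zero columns given by column identity. Then the relation Δ induces a well-defined bijection F from the set of equivalence classes of non-zero rows to the set of equivalence classes of non-zero columns, such that for every non-zero row p and non-zero column t, Δ p t = true if and only if F maps the class of p to the class of t. (In other words, after identifying identical rows and identical columns and deleting zero rows and zero columns, M_Δ becomes the identity matrix under some permutation of rows and columns.) -/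
/-- `M_Δ` contains the wildcard matrix. -/
def ContainsWildcard {σP σT : Type*} (Δ : σP → σT → Bool) : Prop :=
  ∃ (p₁ p₂ : σP) (t₁ t₂ : σT),
    Δ p₁ t₁ = true ∧ Δ p₁ t₂ = true ∧ Δ p₂ t₁ = true ∧ Δ p₂ t₂ = false

/-- The equivalence relation of row identity on the non-zero rows of `M_Δ`. -/
def rowSetoid {σP σT : Type*} (Δ : σP → σT → Bool) :
    Setoid {p : σP // ∃ t, Δ p t = true} where
  r p q := ∀ t, Δ p.1 t = Δ q.1 t
  iseqv := ⟨fun _ _ => rfl, fun h t => (h t).symm, fun h₁ h₂ t => (h₁ t).trans (h₂ t)⟩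

/-- The equivalence relation of column identity on the non-zero columns of `M_Δ`. -/
def colSetoid {σP σT : Type*} (Δ : σP → σT → Bool) :
    Setoid {t : σT // ∃ p, Δ p t = true} where
  r s u := ∀ p, Δ p s.1 = Δ p u.1
  iseqv := ⟨fun _ _ => rfl, fun h p => (h p).symm, fun h₁ h₂ p => (h₁ p).trans (h₂ p)⟩

/-!
Without the wildcard matrix, two columns sharing a `1` in some row are identical, and two rows
sharing a `1` in some column are identical. Hence sending a non-zero row to any column in which
it has a `1` is well defined on classes and its graph is exactly the support of `Δ`; it is
injective because rows sharing a `1` agree, and surjective because every non-zero column has a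
`1` in some row.
-/

section NoWildcard

variable {σP σT : Type*} {Δ : σP → σT → Bool}

theorem eq_true_of_not_containsWildcard (hno : ¬ ContainsWildcard Δ) {p₁ p₂ : σP} {t₁ t₂ : σT}
    (h₁₁ : Δ p₁ t₁ = true) (h₁₂ : Δ p₁ t₂ = true) (h₂₁ : Δ p₂ t₁ = true) : Δ p₂ t₂ = true := by
  by_contra h₂₂
  exact hno ⟨p₁, p₂, t₁, t₂, h₁₁, h₁₂, h₂₁, by simpa using h₂₂⟩

theorem col_eq_of_not_containsWildcard (hno : ¬ ContainsWildcard Δ) {p : σP} {t t' : σT}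
    (ht : Δ p t = true) (ht' : Δ p t' = true) (q : σP) : Δ q t = Δ q t' :=
  Bool.eq_iff_iff.2
    ⟨eq_true_of_not_containsWildcard hno ht ht', eq_true_of_not_containsWildcard hno ht' ht⟩

theorem row_eq_of_not_containsWildcard (hno : ¬ ContainsWildcard Δ) {p p' : σP} {t : σT}
    (hp : Δ p t = true) (hp' : Δ p' t = true) (s : σT) : Δ p s = Δ p' s :=
  Bool.eq_iff_iff.2
    ⟨(eq_true_of_not_containsWildcard hno hp · hp'),
      (eq_true_of_not_containsWildcard hno hp' · hp)⟩

end NoWildcard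

section ClassMap

variable {σP σT : Type*} (Δ : σP → σT → Bool)

noncomputable def oneColumn (p : {p : σP // ∃ t, Δ p t = true}) :
    {t : σT // ∃ p, Δ p t = true} :=
  ⟨p.2.choose, p.1, p.2.choose_spec⟩

theorem apply_oneColumn (p : {p : σP // ∃ t, Δ p t = true}) : Δ p.1 (oneColumn Δ p).1 = true :=
  p.2.choose_spec

variable {Δ}

noncomputable def rowClassToColClass (hno : ¬ ContainsWildcard Δ) :
    Quotient (rowSetoid Δ) → Quotient (colSetoid Δ) :=
  Quotient.lift (fun p => Quotient.mk (colSetoid Δ) (oneColumn Δ p)) fun p q hpq =>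
    Quotient.sound <| col_eq_of_not_containsWildcard hno (apply_oneColumn Δ p)
      ((hpq _).trans (apply_oneColumn Δ q))

variable (hno : ¬ ContainsWildcard Δ)

theorem rowClassToColClass_mk_eq_mk_iff (p : {p : σP // ∃ t, Δ p t = true})
    (t : {t : σT // ∃ p, Δ p t = true}) :
    rowClassToColClass hno (Quotient.mk _ p) = Quotient.mk _ t ↔ Δ p.1 t.1 = true := by
  refine Quotient.eq.trans ⟨fun h => ?_, col_eq_of_not_containsWildcard hno (apply_oneColumn Δ p)⟩
  exact (h p.1).symm.trans (apply_oneColumn Δ p)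

theorem rowClassToColClass_injective : Function.Injective (rowClassToColClass hno) := by
  refine Quotient.ind₂ fun p q hpq => Quotient.sound ?_
  have hq : rowClassToColClass hno (Quotient.mk _ q) = Quotient.mk _ (oneColumn Δ q) :=
    (rowClassToColClass_mk_eq_mk_iff hno q _).2 (apply_oneColumn Δ q)
  have hp : Δ p.1 (oneColumn Δ q).1 = true :=
    (rowClassToColClass_mk_eq_mk_iff hno p _).1 (hpq.trans hq)
  exact row_eq_of_not_containsWildcard hno hp (apply_oneColumn Δ q)

theorem rowClassToColClass_surjective : Function.Surjective (rowClassToColClass hno) :=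
  Quotient.ind fun ⟨t, p, hpt⟩ =>
    ⟨Quotient.mk _ ⟨p, t, hpt⟩, (rowClassToColClass_mk_eq_mk_iff hno ⟨p, t, hpt⟩ ⟨t, p, hpt⟩).2 hpt⟩

end ClassMap

/-- If `M_Δ` does not contain the wildcard matrix, then `Δ` induces a bijection `F`
between the classes of identical non-zero rows and the classes of identical
non-zero columns, with `Δ p t = true` iff `F` maps the class of `p` to the class
of `t`: after identifying identical rows/columns and deleting zero rows/columns,
`M_Δ` is the identity matrix under some permutation of rows and columns. -/
theorem identity_matrix_of_no_wildcard {σP σT : Type*} (Δ : σP → σT → Bool)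
    (hno : ¬ ContainsWildcard Δ) :
    ∃ F : Quotient (rowSetoid Δ) ≃ Quotient (colSetoid Δ),
      ∀ (p : {p : σP // ∃ t, Δ p t = true}) (t : {t : σT // ∃ p, Δ p t = true}),
        Δ p.1 t.1 = true ↔ F (Quotient.mk (rowSetoid Δ) p) = Quotient.mk (colSetoid Δ) t :=
  ⟨Equiv.ofBijective _ ⟨rowClassToColClass_injective hno, rowClassToColClass_surjective hno⟩,
    fun p t => (rowClassToColClass_mk_eq_mk_iff hno p t).symm⟩
end

section
/- Let Σ_P and Σ_T be types and Δ : Σ_P → Σ_T → Bool. Then M_Δ does not contain the wildcard matrix if and only if there exist a type σ and functions φ : Σ_P → Option σ and ψ : Σ_T → Option σ such that for all p ∈ Σ_P and t ∈ Σ_T, Δ p t = true if and only if there exists s : σ with φ p = some s and ψ t = some s. (This expresses that wildcard-free matching relations are exactly those reducible to exact matching of representative symbols.) -/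
/-!
Avoiding the wildcard matrix says that `R p t := Δ p t = true` is difunctional (Riguet):
`R a₁ b₁`, `R a₁ b₂` and `R a₂ b₁` force `R a₂ b₂`. Two rows of a difunctional relation that
share a column are equal, so every column `t` in the support lies in a single block `{t' | ∃ p, R p t ∧ R p t'}`, and this block is the row of every `p` matching `t`.
Sending each nonempty row and each column to that block reduces `R` to exact matching.
Conversely, exact matching is difunctional since `φ p₁ = ψ t₁ = φ p₂` and `φ p₁ = ψ t₂`.
-/

universe u v w

def Difunctional {α : Type u} {β : Type v} (R : α → β → Prop) : Prop :=
  ∀ ⦃a₁ a₂ b₁ b₂⦄, R a₁ b₁ → R a₁ b₂ → R a₂ b₁ → R a₂ b₂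

theorem difunctional_iff_not_exists_wildcard {α : Type u} {β : Type v} (Δ : α → β → Bool) :
    Difunctional (fun a b => Δ a b = true) ↔
      ¬ ∃ (a₁ a₂ : α) (b₁ b₂ : β),
        Δ a₁ b₁ = true ∧ Δ a₁ b₂ = true ∧ Δ a₂ b₁ = true ∧ Δ a₂ b₂ = false := by
  simp only [Difunctional, not_exists, not_and, Bool.not_eq_false]

theorem difunctional_of_forall_iff_exists_eq_some {α : Type u} {β : Type v} {σ : Type w}
    {R : α → β → Prop} (f : α → Option σ) (g : β → Option σ)
    (h : ∀ a b, R a b ↔ ∃ s, f a = some s ∧ g b = some s) : Difunctional R := by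
  intro a₁ a₂ b₁ b₂ h₁₁ h₁₂ h₂₁
  obtain ⟨s, hf₁, hg₁⟩ := (h a₁ b₁).1 h₁₁
  obtain ⟨s', hf₁', hg₂⟩ := (h a₁ b₂).1 h₁₂
  obtain ⟨s'', hf₂, hg₁'⟩ := (h a₂ b₁).1 h₂₁
  obtain rfl : s = s' := Option.some_injective _ (hf₁.symm.trans hf₁')
  obtain rfl : s = s'' := Option.some_injective _ (hg₁.symm.trans hg₁')
  exact (h a₂ b₂).2 ⟨s, hf₂, hg₂⟩

namespace Difunctional

variable {α : Type u} {β : Type v} {R : α → β → Prop}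

theorem setOf_eq_block (hR : Difunctional R) {a : α} {b : β} (hab : R a b) :
    {b' | R a b'} = {b' | ∃ a', R a' b ∧ R a' b'} := by
  ext b'
  exact ⟨fun hab' => ⟨a, hab, hab'⟩, fun ⟨_, ha'b, ha'b'⟩ => hR ha'b ha'b' hab⟩

theorem exists_forall_iff_exists_eq_some (hR : Difunctional R) :
    ∃ (σ : Type v) (f : α → Option σ) (g : β → Option σ),
      ∀ a b, R a b ↔ ∃ s, f a = some s ∧ g b = some s := by
  classical
  refine ⟨Set β, fun a => if ∃ b, R a b then some {b | R a b} else none,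
    fun b => some {b' | ∃ a, R a b ∧ R a b'}, fun a b => ?_⟩
  simp only [Option.ite_none_right_eq_some, Option.some.injEq, and_assoc, exists_and_left,
    exists_eq_left']
  refine ⟨fun hab => ⟨⟨b, hab⟩, (hR.setOf_eq_block hab).symm⟩, fun ⟨⟨b', hab'⟩, hblock⟩ => ?_⟩
  obtain ⟨a', ha'b, -⟩ : b' ∈ {b' | ∃ a', R a' b ∧ R a' b'} := hblock ▸ hab'
  exact (hblock ▸ ⟨a', ha'b, ha'b⟩ : b ∈ {b | R a b})

end Difunctional

/-- `M_Δ` does not contain the wildcard matrix if and only if matching under `Δ`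
reduces to exact matching: there are maps `φ`, `ψ` assigning to each pattern/text
symbol an optional representative symbol in some type `σ`, such that `Δ p t = true`
exactly when `p` and `t` have the same (defined) representative. -/
theorem no_wildcard_iff_exact_matching {σP σT : Type u} (Δ : σP → σT → Bool) :
    (¬ ∃ (p₁ p₂ : σP) (t₁ t₂ : σT),
        Δ p₁ t₁ = true ∧ Δ p₁ t₂ = true ∧ Δ p₂ t₁ = true ∧ Δ p₂ t₂ = false) ↔
      ∃ (σ : Type u) (φ : σP → Option σ) (ψ : σT → Option σ),
        ∀ (p : σP) (t : σT), (Δ p t = true ↔ ∃ s : σ, φ p = some s ∧ ψ t = some s) := by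
  rw [← difunctional_iff_not_exists_wildcard]
  exact ⟨Difunctional.exists_forall_iff_exists_eq_some,
    fun ⟨_, φ, ψ, h⟩ => difunctional_of_forall_iff_exists_eq_some φ ψ h⟩
end

section
/- Let n be a natural number and π a permutation of Fin n such that every element is displaced by at most one position, i.e. for every i, either (π i : ℕ) = i, or (π i : ℕ) = i + 1, or (π i : ℕ) + 1 = i. Then π is an involution: π (π i) = i for every i. (Hence such permutations are exactly the products of disjoint transpositions of adjacent positions.) -/
/-!
If `π i = i + 1`, then `π (i + 1)` is `i` or `i + 2`. In the second case the preimage of `i` can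
be neither `i` nor `i + 1`, so it is `i - 1`; by induction on `i` this forces `π i = i - 1`, a
contradiction. Hence an upward step by one is always undone, and applying the same fact to `π⁻¹`
handles downward steps.
-/

namespace Equiv.Perm

variable {n : ℕ} {π : Perm (Fin n)}

def MovesAtMostOne (π : Perm (Fin n)) : Prop :=
  ∀ i : Fin n, (π i : ℕ) = i ∨ (π i : ℕ) = i + 1 ∨ (π i : ℕ) + 1 = i

theorem MovesAtMostOne.symm (hπ : MovesAtMostOne π) : MovesAtMostOne π.symm := by
  intro j
  have := hπ (π.symm j)
  rw [apply_symm_apply] at this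
  omega

theorem MovesAtMostOne.apply_eq_of_apply_eq_succ (hπ : MovesAtMostOne π) {i j : Fin n}
    (hij : (j : ℕ) = i + 1) (hi : π i = j) : π j = i := by
  induction i using WellFoundedLT.induction generalizing j with
  | ind i ih =>
  rcases hπ j with hj | hj | hj
  · have : π j = π i := by rw [hi]; exact Fin.ext hj
    exact absurd (π.injective this) (by omega)
  · obtain ⟨k, hk⟩ := π.surjective i
    have hk_ne_i : (k : ℕ) ≠ i := by
      intro h; rw [Fin.ext h, hi] at hk; omega
    have hk_ne_j : (k : ℕ) ≠ j := by
      intro h; rw [Fin.ext h] at hk; omega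
    have hi_succ : (i : ℕ) = k + 1 := by
      have := hπ k; rw [hk] at this; omega
    have hik : π i = k := ih k (Fin.lt_def.2 (by omega)) hi_succ hk
    rw [hi] at hik
    omega
  · exact Fin.ext (by omega)

theorem MovesAtMostOne.apply_apply (hπ : MovesAtMostOne π) (i : Fin n) : π (π i) = i := by
  rcases hπ i with hi | hi | hi
  · rw [Fin.ext hi, Fin.ext hi]
  · exact hπ.apply_eq_of_apply_eq_succ hi rfl
  · have := hπ.symm.apply_eq_of_apply_eq_succ hi.symm (π.symm_apply_apply i)
    rw [← this, apply_symm_apply]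

end Equiv.Perm

/-- A permutation of `Fin n` displacing every element by at most one position
is an involution. -/
theorem involution_of_displacement_le_one (n : ℕ) (π : Equiv.Perm (Fin n))
    (h : ∀ i : Fin n, (π i : ℕ) = i ∨ (π i : ℕ) = i + 1 ∨ (π i : ℕ) + 1 = i) :
    ∀ i : Fin n, π (π i) = i :=
  Equiv.Perm.MovesAtMostOne.apply_apply h
end

section
/- Let m be a natural number, P : Fin m → Bool (where false encodes the pattern symbol ★ and true encodes the pattern symbol x) and T : Fin m → Bool (where false encodes the text symbol a and true encodes the text symbol b). Encode each pattern symbol by a 5-bit block via ★ ↦ 00100 and x ↦ 00010, and each text symbol by a 5-bit block via a ↦ 00010 and b ↦ 01000, and let P' and T' be the length-5m Boolean strings obtained by concatenating the blocks of P and of T respectively. Then T' is a swap match of P' if and only if there is no position i with P i = x and T i = b (equivalently, if and only if for every i, ¬(P i = true ∧ T i = true)). -/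
/-- `S'` is a swap match of `S`: `S'` is obtained from `S` by a set of swaps of
adjacent characters, each position being swapped at most once. -/
def SwapMatch {n : ℕ} (S S' : Fin n → Bool) : Prop :=
  ∃ π : Equiv.Perm (Fin n),
    (∀ i, π (π i) = i) ∧
    (∀ i : Fin n, (π i : ℕ) = i ∨ (π i : ℕ) = i + 1 ∨ (π i : ℕ) + 1 = i) ∧
    (∀ i, S' i = S (π i))

/-- The 5-bit block encoding a pattern symbol: `★` (false) ↦ `00100`,
`x` (true) ↦ `00010`. -/
def patBlock (b : Bool) : Fin 5 → Bool :=
  if b then ![false, false, false, true, false] else ![false, false, true, false, false]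

/-- The 5-bit block encoding a text symbol: `a` (false) ↦ `00010`,
`b` (true) ↦ `01000`. -/
def txtBlock (b : Bool) : Fin 5 → Bool :=
  if b then ![false, true, false, false, false] else ![false, false, false, true, false]

/-- Concatenation of `m` blocks of length 5: position `5*i + k` of the result
is bit `k` of the `i`-th block. -/
def concatBlocks {m : ℕ} (f : Fin m → Fin 5 → Bool) : Fin (5 * m) → Bool :=
  fun j => f ⟨(j : ℕ) / 5, by have := j.isLt; omega⟩ ⟨(j : ℕ) % 5, by omega⟩

/-!
A swap match moves every bit by at most one position. In the pattern block `00010` of `x` the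
`1` sits at offset 3, so it can only be matched inside the same block at offset 2, 3 or 4, where
the text block `01000` of `b` is `0`. Every other pair of symbols is swap matched inside its block
(`★`/`a` by swapping offsets 2 and 3, `★`/`b` by swapping offsets 1 and 2, `x`/`a` trivially),
and blockwise swap matches concatenate.
-/

def blockEquiv (m : ℕ) : Fin m × Fin 5 ≃ Fin (5 * m) where
  toFun x := ⟨5 * x.1 + x.2, by omega⟩
  invFun j := (⟨j / 5, by omega⟩, ⟨j % 5, by omega⟩)
  left_inv x := by ext <;> simp; omega
  right_inv j := by ext; simp; omega

@[simp]
lemma blockEquiv_apply_val {m : ℕ} (x : Fin m × Fin 5) :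
    (blockEquiv m x : ℕ) = 5 * x.1 + x.2 := rfl

@[simp]
lemma concatBlocks_blockEquiv {m : ℕ} (f : Fin m → Fin 5 → Bool) (i : Fin m) (k : Fin 5) :
    concatBlocks f (blockEquiv m (i, k)) = f i k := by
  simp only [concatBlocks, blockEquiv_apply_val]
  congr 2 <;> omega

namespace SwapMatch

lemma exists_near {n : ℕ} {S S' : Fin n → Bool} (h : SwapMatch S S') (j : Fin n) :
    ∃ j', S' j' = S j ∧ ((j' : ℕ) = j ∨ (j' : ℕ) = j + 1 ∨ (j' : ℕ) + 1 = j) :=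
  let ⟨π, hinv, hnear, hmatch⟩ := h
  ⟨π j, by rw [hmatch, hinv], hnear j⟩

lemma concatBlocks {m : ℕ} {f g : Fin m → Fin 5 → Bool} (h : ∀ i, SwapMatch (f i) (g i)) :
    SwapMatch (concatBlocks f) (concatBlocks g) := by
  choose σ hinv hnear hmatch using h
  set π : Equiv.Perm (Fin (5 * m)) := (blockEquiv m).permCongr (Equiv.prodShear (.refl _) σ)
  have hπ (i : Fin m) (k : Fin 5) : π (blockEquiv m (i, k)) = blockEquiv m (i, σ i k) := by
    simp [π]
  refine ⟨π, ?_, ?_, ?_⟩ <;>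
    intro j <;> obtain ⟨⟨i, k⟩, rfl⟩ := (blockEquiv m).surjective j <;> simp only [hπ]
  · rw [hinv]
  · have := hnear i k
    simp only [blockEquiv_apply_val]
    omega
  · simp only [concatBlocks_blockEquiv, hmatch]

end SwapMatch

lemma swapMatch_patBlock_txtBlock {p t : Bool} (h : ¬(p = true ∧ t = true)) :
    SwapMatch (patBlock p) (txtBlock t) := by
  cases p <;> cases t
  · exact ⟨Equiv.swap 2 3, by decide⟩
  · exact ⟨Equiv.swap 1 2, by decide⟩
  · exact ⟨Equiv.refl _, by decide⟩
  · simp at h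

/-- The concatenated text encoding swap matches the concatenated pattern encoding
iff no position aligns pattern symbol `x` with text symbol `b`. -/
theorem swap_match_encoding_iff (m : ℕ) (P T : Fin m → Bool) :
    SwapMatch (concatBlocks fun i => patBlock (P i)) (concatBlocks fun i => txtBlock (T i)) ↔
      ∀ i : Fin m, ¬ (P i = true ∧ T i = true) := by
  refine ⟨fun h i ⟨hP, hT⟩ => ?_,
    fun h => SwapMatch.concatBlocks fun i => swapMatch_patBlock_txtBlock (h i)⟩
  obtain ⟨j, hj, hnear⟩ := h.exists_near (blockEquiv m (i, 3))
  obtain ⟨⟨i', k⟩, rfl⟩ := (blockEquiv m).surjective j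
  simp only [blockEquiv_apply_val, Fin.isValue] at hnear
  obtain rfl : i' = i := by ext; omega
  have hk : 2 ≤ k := by rw [Fin.le_def]; omega
  simp only [concatBlocks_blockEquiv, hP, hT] at hj
  clear hnear
  revert k
  decide
end

section
/- Let L : List Bool be a Boolean string of length m, let n < m, and let e(n,m) = List.replicate n false ++ [true] ++ List.replicate (m − 1 − n) false be the length-m string with a single one at position n. If the character of L at position n is true, then the Levenshtein edit distance with unit costs between L and e(n,m) equals L.count true − 1. -/
/-- Cost structure for the Levenshtein edit distance (as in Mathlib, December 2024). -/
structure Levenshtein.Cost (α β δ : Type*) where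
  /-- Cost to delete an element from a list. -/
  delete : α → δ
  /-- Cost in insert an element into a list. -/
  insert : β → δ
  /-- Cost to substitute one element for another in a list. -/
  substitute : α → β → δ

/-- The default cost structure, for which all operations cost `1`. -/
def Levenshtein.defaultCost {α : Type*} [DecidableEq α] : Levenshtein.Cost α α ℕ where
  delete _ := 1
  insert _ := 1
  substitute a b := if a = b then 0 else 1

namespace Levenshtein

/-- (Implementation detail of `suffixLevenshtein`.) -/
def impl {α β δ : Type*} [AddZeroClass δ] [Min δ] (C : Levenshtein.Cost α β δ)
    (xs : List α) (y : β) (d : {r : List δ // 0 < r.length}) : {r : List δ // 0 < r.length} :=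
  let ⟨ds, w⟩ := d
  xs.zip (ds.zip ds.tail) |>.foldr
    (init := ⟨[C.insert y + ds.getLast (List.length_pos_iff.mp w)], by simp⟩)
    (fun ⟨x, d₀, d₁⟩ ⟨r, w⟩ =>
      ⟨min (C.delete x + r[0]) (min (C.insert y + d₀) (C.substitute x y + d₁)) :: r, by simp⟩)

end Levenshtein

/-- `suffixLevenshtein C xs ys` computes the Levenshtein distance
(using the cost functions provided by a `C : Cost α β δ`)
from each suffix of the list `xs` to the list `ys`. -/
def suffixLevenshtein {α β δ : Type*} [AddZeroClass δ] [Min δ] (C : Levenshtein.Cost α β δ)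
    (xs : List α) (ys : List β) : {r : List δ // 0 < r.length} :=
  ys.foldr
    (Levenshtein.impl C xs)
    (xs.foldr (init := ⟨[0], by simp⟩) (fun a ⟨r, w⟩ => ⟨(C.delete a + r[0]) :: r, by simp⟩))

/-- `levenshtein C xs ys` computes the Levenshtein distance
(using the cost functions provided by a `C : Cost α β δ`)
from the list `xs` to the list `ys`. -/
def levenshtein {α β δ : Type*} [AddZeroClass δ] [Min δ] (C : Levenshtein.Cost α β δ)
    (xs : List α) (ys : List β) : δ :=
  let ⟨r, w⟩ := suffixLevenshtein C xs ys
  r[0]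

/-! Each edit operation changes the number of `true`s by at most one, so the distance is at least
`L.count true - 1`. Conversely, the distance between two strings of equal length is at most their
Hamming distance, and `L` differs from the one-hot string exactly at its `true`s other than the one
at position `n`. -/

namespace Levenshtein

section
variable {α : Type*} [DecidableEq α]

@[simp]
theorem defaultCost_delete (a : α) : (defaultCost (α := α)).delete a = 1 := rfl

@[simp]
theorem defaultCost_insert (a : α) : (defaultCost (α := α)).insert a = 1 := rfl

@[simp]
theorem defaultCost_substitute (a b : α) :
    (defaultCost (α := α)).substitute a b = if a = b then 0 else 1 := rfl

end

theorem impl_cons_val {α β δ : Type*} [AddZeroClass δ] [Min δ] (C : Cost α β δ)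
    (x : α) (xs : List α) (y : β) (d : δ) (ds : List δ)
    (w : 0 < (d :: ds).length) (w' : 0 < ds.length) :
    (impl C (x :: xs) y ⟨d :: ds, w⟩).1 =
      min (C.delete x + (impl C xs y ⟨ds, w'⟩).1[0]'(impl C xs y ⟨ds, w'⟩).2)
        (min (C.insert y + d) (C.substitute x y + ds[0])) :: (impl C xs y ⟨ds, w'⟩).1 :=
  match ds, w' with | _ :: _, _ => rfl

end Levenshtein

open Levenshtein

section
variable {α β δ : Type*} [AddZeroClass δ] [Min δ] (C : Cost α β δ)

theorem suffixLevenshtein_cons_left (x : α) (xs : List α) (ys : List β) :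
    suffixLevenshtein C (x :: xs) ys =
      ⟨levenshtein C (x :: xs) ys :: (suffixLevenshtein C xs ys).1, by simp⟩ := by
  induction ys with
  | nil => rfl
  | cons y ys ih =>
    ext1
    change (impl C (x :: xs) y (suffixLevenshtein C (x :: xs) ys)).1 =
      (impl C (x :: xs) y (suffixLevenshtein C (x :: xs) ys)).1[0]'(impl _ _ _ _).2 ::
        (impl C xs y (suffixLevenshtein C xs ys)).1
    simp only [ih, impl_cons_val C x xs y _ _ _ (suffixLevenshtein C xs ys).2,
      List.getElem_cons_zero]

@[simp]
theorem levenshtein_nil_nil : levenshtein C ([] : List α) ([] : List β) = 0 :=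
  rfl

theorem levenshtein_cons_nil (x : α) (xs : List α) :
    levenshtein C (x :: xs) ([] : List β) = C.delete x + levenshtein C xs ([] : List β) :=
  rfl

theorem levenshtein_cons_cons (x : α) (xs : List α) (y : β) (ys : List β) :
    levenshtein C (x :: xs) (y :: ys) =
      min (C.delete x + levenshtein C xs (y :: ys))
        (min (C.insert y + levenshtein C (x :: xs) ys)
          (C.substitute x y + levenshtein C xs ys)) := by
  change (impl C (x :: xs) y (suffixLevenshtein C (x :: xs) ys)).1[0]'(impl _ _ _ _).2 = _
  simp only [suffixLevenshtein_cons_left,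
    impl_cons_val C x xs y _ _ _ (suffixLevenshtein C xs ys).2, List.getElem_cons_zero]
  rfl

end

section
variable {α : Type*} [DecidableEq α]

theorem count_le_count_add_levenshtein (a : α) (xs ys : List α) :
    xs.count a ≤ ys.count a + levenshtein defaultCost xs ys := by
  induction xs generalizing ys with
  | nil => simp
  | cons x xs ihx =>
    induction ys with
    | nil =>
      have := ihx []
      simp only [levenshtein_cons_nil, List.count_cons, defaultCost_delete] at this ⊢
      split_ifs <;> omega
    | cons y ys ihy =>
      have hdel := ihx (y :: ys)
      have hsub := ihx ys
      rw [levenshtein_cons_cons]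
      simp only [List.count_cons, defaultCost_delete, defaultCost_insert, defaultCost_substitute,
        beq_iff_eq] at hdel hsub ihy ⊢
      have hx : (if x = a then 1 else 0) ≤ 1 := by split <;> omega
      have hy : (if y = a then 1 else 0) ≤ 1 := by split <;> omega
      by_cases hxy : x = y
      · subst hxy
        simp only [if_true]
        omega
      · simp only [hxy, if_false]
        omega

theorem levenshtein_le_countP_zip_ne (xs ys : List α) (h : xs.length = ys.length) :
    levenshtein defaultCost xs ys ≤ (xs.zip ys).countP (fun p => p.1 ≠ p.2) := by
  induction xs generalizing ys with
  | nil => cases ys <;> simp_all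
  | cons x xs ih =>
    obtain _ | ⟨y, ys⟩ := ys
    · simp at h
    have := ih ys (by simpa using h)
    rw [levenshtein_cons_cons, List.zip_cons_cons, List.countP_cons]
    refine (min_le_right _ _).trans ((min_le_right _ _).trans ?_)
    by_cases hxy : x = y <;> simp [hxy] at this ⊢ <;> omega

theorem countP_zip_replicate_ne (xs : List α) (c : α) :
    (xs.zip (List.replicate xs.length c)).countP (fun p => p.1 ≠ p.2) = xs.countP (· ≠ c) := by
  induction xs with
  | nil => rfl
  | cons x xs ih => simp_all [List.replicate_succ, List.countP_cons]

theorem levenshtein_append_cons_replicate_le (A B : List α) (b c : α) :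
    levenshtein defaultCost (A ++ b :: B)
        (List.replicate A.length c ++ b :: List.replicate B.length c) ≤
      A.countP (· ≠ c) + B.countP (· ≠ c) := by
  refine (levenshtein_le_countP_zip_ne _ _ (by simp)).trans_eq ?_
  rw [List.zip_append (by simp), List.countP_append, List.zip_cons_cons, List.countP_cons,
    countP_zip_replicate_ne, countP_zip_replicate_ne]
  simp

end

/-- If `L` has length `m`, `n < m` and the character of `L` at position `n` is
`true`, then the Levenshtein distance (unit costs) between `L` and the length-`m`
string with a single one at position `n` is `L.count true - 1`. -/
theorem levenshtein_single_one_of_true (m n : ℕ) (L : List Bool)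
    (hL : L.length = m) (hn : n < m)
    (h : L.get ⟨n, by omega⟩ = true) :
    levenshtein Levenshtein.defaultCost L
        (List.replicate n false ++ [true] ++ List.replicate (m - 1 - n) false) =
      L.count true - 1 := by
  subst hL
  obtain ⟨A, B, rfl, rfl⟩ : ∃ A B, L = A ++ true :: B ∧ A.length = n := by
    refine ⟨L.take n, L.drop (n + 1), ?_, by simp; omega⟩
    rw [List.get_eq_getElem] at h
    rw [← h, ← List.drop_eq_getElem_cons hn, List.take_append_drop]
  have hlen : (A ++ true :: B).length - 1 - A.length = B.length := by simp
  rw [hlen, List.append_assoc, List.singleton_append]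
  have lower := count_le_count_add_levenshtein true (A ++ true :: B)
    (List.replicate A.length false ++ true :: List.replicate B.length false)
  have upper : _ ≤ A.count true + B.count true :=
    (levenshtein_append_cons_replicate_le A B true false).trans_eq
      (by simp [List.count_eq_countP])
  simp [List.count_replicate] at lower ⊢
  omega
end

section
/- Let m ≥ 1 and let P : Fin m → ℤ and T : Fin m → ℤ satisfy P j ∈ {0, 1} and T j ∈ {2, 3} for all j. Then the L∞ distance max over j of |P j − T j| satisfies: it is at most 2 (equivalently, strictly less than 3) if and only if there is no position j with P j = 0 and T j = 3; and otherwise it equals 3. (This is the equivalence between the L∞ distance computation and the wildcard-containing conjunction problem used to prove the linear space lower bound for L∞.) -/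
namespace Int

variable {p t : ℤ}

theorem abs_sub_le_three (hp : p = 0 ∨ p = 1) (ht : t = 2 ∨ t = 3) : |p - t| ≤ 3 := by
  rcases hp with rfl | rfl <;> rcases ht with rfl | rfl <;> norm_num

theorem abs_sub_le_two_iff (hp : p = 0 ∨ p = 1) (ht : t = 2 ∨ t = 3) :
    |p - t| ≤ 2 ↔ ¬ (p = 0 ∧ t = 3) := by
  rcases hp with rfl | rfl <;> rcases ht with rfl | rfl <;> norm_num

end Int

/-- For `P` with values in `{0,1}` and `T` with values in `{2,3}`, the `L∞`
distance `max_j |P j - T j|` is at most `2` iff there is no position `j` with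
`P j = 0` and `T j = 3`, and otherwise it equals `3`. -/
theorem linfty_dichotomy (m : ℕ) (hm : 1 ≤ m) (P T : Fin m → ℤ)
    (hP : ∀ j, P j = 0 ∨ P j = 1) (hT : ∀ j, T j = 2 ∨ T j = 3) :
    ((Finset.univ.sup' ⟨⟨0, hm⟩, Finset.mem_univ _⟩ fun j => |P j - T j|) ≤ 2 ↔
      ¬ ∃ j, P j = 0 ∧ T j = 3) ∧
    ((∃ j, P j = 0 ∧ T j = 3) →
      (Finset.univ.sup' ⟨⟨0, hm⟩, Finset.mem_univ _⟩ fun j => |P j - T j|) = 3) := by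
  constructor
  · refine (Finset.sup'_le_iff _ _).trans (Iff.trans ?_ not_exists.symm)
    exact forall_congr' fun j => by
      simpa only [Finset.mem_univ, true_implies] using Int.abs_sub_le_two_iff (hP j) (hT j)
  · rintro ⟨j, hPj, hTj⟩
    refine le_antisymm (Finset.sup'_le _ _ fun i _ => Int.abs_sub_le_three (hP i) (hT i)) ?_
    exact Finset.le_sup'_of_le _ (Finset.mem_univ j) (by simp [hPj, hTj])
end

section
/- Let α be a type, f : α → ℤ, a ∈ α, m a natural number, and T : Fin m → α. For n a natural number, define D n = Σ over j ∈ Finset.range m of f (if n + j < m then T (n+j) else a), the sum of f over the length-m window starting at offset n of the infinite string T followed by infinitely many copies of a. Then for every n < m, D (n+1) − D n = f a − f (T n); in particular D n = D (n+1) if and only if f (T n) = f a. (This is the correctness of the Indexing reduction for local pattern matching under addition: feeding one more copy of a changes the reported sum exactly when the indexed text character differs from a in f-value.) -/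
/-! Consecutive windows share all but one term: moving from offset `n` to `n + 1` brings in
position `n + m`, which lies in the padding and contributes `f a`, and drops position `n`,
which is the text character `T n`. -/

open Finset

theorem sum_range_shift_sub {M : Type*} [AddCommGroup M] (g : ℕ → M) (n m : ℕ) :
    ∑ j ∈ range m, g (n + 1 + j) - ∑ j ∈ range m, g (n + j) = g (n + m) - g n := by
  have hsucc := sum_range_succ (fun j => g (n + j)) m
  rw [sum_range_succ'] at hsucc
  simp only [add_zero, ← add_assoc, Nat.add_right_comm n _ 1] at hsucc
  rw [eq_sub_of_add_eq hsucc]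
  abel

/-- Correctness of the Indexing reduction for local pattern matching under
addition: if `D n` is the sum of `f` over the length-`m` window of the text `T`
(padded with infinitely many copies of `a`) starting at offset `n`, then for
`n < m` we have `D (n+1) - D n = f a - f (T n)`; in particular `D n = D (n+1)`
iff `f (T n) = f a`. -/
theorem indexing_reduction_addition {α : Type*} (f : α → ℤ) (a : α) (m : ℕ)
    (T : Fin m → α) (D : ℕ → ℤ)
    (hD : ∀ n, D n = ∑ j ∈ Finset.range m,
      f (if h : n + j < m then T ⟨n + j, h⟩ else a)) :
    ∀ (n : ℕ) (hn : n < m),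
      D (n + 1) - D n = f a - f (T ⟨n, hn⟩) ∧
      (D n = D (n + 1) ↔ f (T ⟨n, hn⟩) = f a) := by
  intro n hn
  let g : ℕ → ℤ := fun k => f (if h : k < m then T ⟨k, h⟩ else a)
  have hstep : D (n + 1) - D n = f a - f (T ⟨n, hn⟩) := by
    have hshift := sum_range_shift_sub g n m
    simp only [g, dif_neg (Nat.le_add_left m n).not_gt, dif_pos hn] at hshift
    rw [hD, hD, ← hshift]
  exact ⟨hstep, by omega⟩
end
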